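/- arXiv:1203.3908 — 6 statements merged into one kernel-verified Lean document; each statement's English description precedes it below -/
import Mathlib

section
/- Let M ∈ M_3(ℂ) be normal with non-collinear eigenvalues z₁, z₂, z₃. Then diag(a, b) is a compression of M if and only if (up to permuting indices) either a = z₁ and b ∈ [z₂,z₃], or a ∈ [z₂,z₃] and b = z₁, where [z,w] denotes the line segment joining z and w. -/
open Matrix BigOperators Finset

noncomputable section

/-- Numerical range of a complex matrix. -/
def NumRange {n : ℕ} (M : Matrix (Fin n) (Fin n) ℂ) : Set ℂ :=
  { c | ∃ u : Fin n → ℂ, star u ⬝ᵥ u = 1 ∧ star u ⬝ᵥ M.mulVec u = c }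

/-- `C` is a rank-`k` compression of `M`: `C` represents `P_S M |_S` in some
orthonormal basis of a `k`-dimensional subspace `S`. -/
def IsCompression {N k : ℕ} (M : Matrix (Fin N) (Fin N) ℂ)
    (C : Matrix (Fin k) (Fin k) ℂ) : Prop :=
  ∃ f : Fin k → (Fin N → ℂ),
    (∀ i j, star (f i) ⬝ᵥ f j = if i = j then 1 else 0) ∧
    (∀ i j, C i j = star (f i) ⬝ᵥ M.mulVec (f j))

/-- `diag(a,b)` is a compression of `M`. -/
def IsDiagCompression {N : ℕ} (M : Matrix (Fin N) (Fin N) ℂ) (a b : ℂ) : Prop :=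
  ∃ u w : Fin N → ℂ,
    star u ⬝ᵥ u = 1 ∧ star w ⬝ᵥ w = 1 ∧ star u ⬝ᵥ w = 0 ∧
    star u ⬝ᵥ M.mulVec u = a ∧ star w ⬝ᵥ M.mulVec w = b ∧
    star u ⬝ᵥ M.mulVec w = 0 ∧ star w ⬝ᵥ M.mulVec u = 0

/-- The rank-`k` numerical range `Λ_k(M)`. -/
def rankNumRange {N : ℕ} (k : ℕ) (M : Matrix (Fin N) (Fin N) ℂ) : Set ℂ :=
  { c | ∃ P : Matrix (Fin N) (Fin N) ℂ,
      P.IsHermitian ∧ P * P = P ∧ P.rank = k ∧ P * M * P = c • P }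

/-- `M` has an orthonormal basis of eigenvectors with eigenvalue list `z`. -/
def HasONEigenbasis {N : ℕ} (M : Matrix (Fin N) (Fin N) ℂ) (z : Fin N → ℂ) : Prop :=
  ∃ f : Fin N → (Fin N → ℂ),
    (∀ i j, star (f i) ⬝ᵥ f j = if i = j then 1 else 0) ∧
    (∀ j, M.mulVec (f j) = z j • f j)

/-- 2D cross product of complex numbers viewed as plane vectors. -/
def cross2 (p q : ℂ) : ℝ := p.re * q.im - p.im * q.re

lemma conj_dot (N : ℕ) (F : Matrix (Fin N) (Fin N) ℂ) (hF : Fᴴ * F = 1)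
    (u v : Fin N → ℂ) : star (F *ᵥ u) ⬝ᵥ (F *ᵥ v) = star u ⬝ᵥ v := by
  rw [star_mulVec, dotProduct_mulVec, vecMul_vecMul, hF, vecMul_one]

lemma conj_dotM (N : ℕ) (F D : Matrix (Fin N) (Fin N) ℂ) (hF : Fᴴ * F = 1)
    (u v : Fin N → ℂ) :
    star (F *ᵥ u) ⬝ᵥ ((F * D * Fᴴ) *ᵥ (F *ᵥ v)) = star u ⬝ᵥ (D *ᵥ v) := by
  rw [star_mulVec, mulVec_mulVec, dotProduct_mulVec, vecMul_vecMul]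
  have : Fᴴ * (F * D * Fᴴ * F) = D := by
    rw [mul_assoc (F*D), hF, mul_one, ← mul_assoc, hF, one_mul]
  rw [this, ← dotProduct_mulVec]

lemma IsDiagCompression.conj {N : ℕ} (F D : Matrix (Fin N) (Fin N) ℂ)
    (hF : Fᴴ * F = 1) (a b : ℂ) (h : IsDiagCompression D a b) :
    IsDiagCompression (F * D * Fᴴ) a b := by
  obtain ⟨u, w, h1, h2, h3, h4, h5, h6, h7⟩ := h
  exact ⟨F *ᵥ u, F *ᵥ w, by rw [conj_dot N F hF]; exact h1, by rw [conj_dot N F hF]; exact h2,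
    by rw [conj_dot N F hF]; exact h3,
    by rw [show (F*D*Fᴴ).mulVec (F *ᵥ u) = (F*D*Fᴴ) *ᵥ (F *ᵥ u) from rfl, conj_dotM N F D hF]; exact h4,
    by rw [show (F*D*Fᴴ).mulVec (F *ᵥ w) = (F*D*Fᴴ) *ᵥ (F *ᵥ w) from rfl, conj_dotM N F D hF]; exact h5,
    by rw [show (F*D*Fᴴ).mulVec (F *ᵥ w) = (F*D*Fᴴ) *ᵥ (F *ᵥ w) from rfl, conj_dotM N F D hF]; exact h6,
    by rw [show (F*D*Fᴴ).mulVec (F *ᵥ u) = (F*D*Fᴴ) *ᵥ (F *ᵥ u) from rfl, conj_dotM N F D hF]; exact h7⟩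

lemma IsDiagCompression.symm {N : ℕ} {M : Matrix (Fin N) (Fin N) ℂ} {a b : ℂ}
    (h : IsDiagCompression M a b) : IsDiagCompression M b a := by
  obtain ⟨u, w, h1, h2, h3, h4, h5, h6, h7⟩ := h
  refine ⟨w, u, h2, h1, ?_, h5, h4, h7, h6⟩
  rw [Matrix.star_dotProduct, h3, star_zero]

lemma czero (z : Fin 3 → ℂ) (hcol : AffineIndependent ℝ z) (u w : Fin 3 → ℂ)
    (e1 : star (u 0) * w 0 + star (u 1) * w 1 + star (u 2) * w 2 = 0)
    (e2 : star (u 0) * (z 0 * w 0) + star (u 1) * (z 1 * w 1) + star (u 2) * (z 2 * w 2) = 0)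
    (e3 : w 0 * (star (z 0) * star (u 0)) + w 1 * (star (z 1) * star (u 1))
        + w 2 * (star (z 2) * star (u 2)) = 0) :
    ∀ i : Fin 3, u i = 0 ∨ w i = 0 := by
  rw [affineIndependent_iff] at hcol
  have r1 := congrArg Complex.re e1
  have i1 := congrArg Complex.im e1
  have r2 := congrArg Complex.re e2
  have i2 := congrArg Complex.im e2
  have r3 := congrArg Complex.re e3
  have i3 := congrArg Complex.im e3
  simp only [Complex.add_re, Complex.add_im, Complex.mul_re, Complex.mul_im, Complex.star_def,
    Complex.conj_re, Complex.conj_im, Complex.zero_re, Complex.zero_im] at r1 i1 r2 i2 r3 i3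
  have hre := hcol Finset.univ (fun i => (star (u i) * w i).re) ?_ ?_
  rotate_left
  · simp only [Complex.add_re, Complex.add_im, Complex.real_smul, Complex.mul_re, Complex.mul_im, Complex.ofReal_re, Complex.ofReal_im, Complex.star_def, Complex.conj_re, Complex.conj_im, Complex.zero_re, Complex.zero_im, Fin.sum_univ_three]
    linear_combination r1
  · simp only [Complex.add_re, Complex.add_im, Complex.real_smul, Complex.mul_re, Complex.mul_im, Complex.ofReal_re, Complex.ofReal_im, Complex.star_def, Complex.conj_re, Complex.conj_im, Complex.zero_re, Complex.zero_im, Fin.sum_univ_three]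
    apply Complex.ext
    · simp only [Complex.add_re, Complex.add_im, Complex.real_smul, Complex.mul_re, Complex.mul_im, Complex.ofReal_re, Complex.ofReal_im, Complex.star_def, Complex.conj_re, Complex.conj_im, Complex.zero_re, Complex.zero_im, Fin.sum_univ_three]
      linear_combination (1/2 : ℝ) * r2 + (1/2 : ℝ) * r3
    · simp only [Complex.add_re, Complex.add_im, Complex.real_smul, Complex.mul_re, Complex.mul_im, Complex.ofReal_re, Complex.ofReal_im, Complex.star_def, Complex.conj_re, Complex.conj_im, Complex.zero_re, Complex.zero_im, Fin.sum_univ_three]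
      linear_combination (1/2 : ℝ) * i2 - (1/2 : ℝ) * i3
  have him := hcol Finset.univ (fun i => (star (u i) * w i).im) ?_ ?_
  rotate_left
  · simp only [Complex.add_re, Complex.add_im, Complex.real_smul, Complex.mul_re, Complex.mul_im, Complex.ofReal_re, Complex.ofReal_im, Complex.star_def, Complex.conj_re, Complex.conj_im, Complex.zero_re, Complex.zero_im, Fin.sum_univ_three]
    linear_combination i1
  · simp only [Complex.add_re, Complex.add_im, Complex.real_smul, Complex.mul_re, Complex.mul_im, Complex.ofReal_re, Complex.ofReal_im, Complex.star_def, Complex.conj_re, Complex.conj_im, Complex.zero_re, Complex.zero_im, Fin.sum_univ_three]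
    apply Complex.ext
    · simp only [Complex.add_re, Complex.add_im, Complex.real_smul, Complex.mul_re, Complex.mul_im, Complex.ofReal_re, Complex.ofReal_im, Complex.star_def, Complex.conj_re, Complex.conj_im, Complex.zero_re, Complex.zero_im, Fin.sum_univ_three]
      linear_combination (1/2 : ℝ) * i2 + (1/2 : ℝ) * i3
    · simp only [Complex.add_re, Complex.add_im, Complex.real_smul, Complex.mul_re, Complex.mul_im, Complex.ofReal_re, Complex.ofReal_im, Complex.star_def, Complex.conj_re, Complex.conj_im, Complex.zero_re, Complex.zero_im, Fin.sum_univ_three]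
      linear_combination (1/2 : ℝ) * r3 - (1/2 : ℝ) * r2
  intro i
  have hc : star (u i) * w i = 0 := by
    apply Complex.ext
    · rw [Complex.zero_re]; exact hre i (Finset.mem_univ i)
    · rw [Complex.zero_im]; exact him i (Finset.mem_univ i)
  rcases mul_eq_zero.mp hc with h | h
  · exact Or.inl (star_eq_zero.mp h)
  · exact Or.inr h

lemma normSq_cast (w1 : ℂ) : ((Complex.normSq w1 : ℝ) : ℂ) = star w1 * w1 := by
  rw [Complex.star_def, mul_comm, Complex.mul_conj]

lemma mem_seg (z1 z2 w1 w2 : ℂ) (h : star w1 * w1 + star w2 * w2 = 1) :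
    star w1 * (z1 * w1) + star w2 * (z2 * w2) ∈ segment ℝ z1 z2 := by
  refine ⟨Complex.normSq w1, Complex.normSq w2, Complex.normSq_nonneg _,
    Complex.normSq_nonneg _, ?_, ?_⟩
  · have h2 : ((Complex.normSq w1 + Complex.normSq w2 : ℝ) : ℂ) = ((1 : ℝ) : ℂ) := by
      push_cast
      rw [normSq_cast, normSq_cast, h]
    exact_mod_cast h2
  · rw [Complex.real_smul, Complex.real_smul, normSq_cast, normSq_cast]
    ring

lemma eq_pt (zz w a : ℂ) (h : star w * w = 1) (hb : star w * (zz * w) = a) : a = zz := by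
  linear_combination (-1 : ℂ) * hb + zz * h

lemma rev_diag (z : Fin 3 → ℂ) (σ : Equiv.Perm (Fin 3)) (s t : ℝ) (hs : 0 ≤ s) (ht : 0 ≤ t)
    (hst : s + t = 1) :
    IsDiagCompression (Matrix.diagonal z) (z (σ 0)) (s • z (σ 1) + t • z (σ 2)) := by
  have h01 : σ 0 ≠ σ 1 := fun h => absurd (σ.injective h) (by decide)
  have h02 : σ 0 ≠ σ 2 := fun h => absurd (σ.injective h) (by decide)
  have h12 : σ 1 ≠ σ 2 := fun h => absurd (σ.injective h) (by decide)
  have hstar : ∀ i : Fin 3, star (Pi.single i (1 : ℂ)) = (Pi.single i 1 : Fin 3 → ℂ) := by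
    intro i; funext j
    simp [Pi.single_apply, apply_ite (star : ℂ → ℂ)]
  have hc1 : (Real.sqrt s : ℂ) * (Real.sqrt s : ℂ) = (s : ℂ) := by
    rw [← Complex.ofReal_mul, Real.mul_self_sqrt hs]
  have hc2 : (Real.sqrt t : ℂ) * (Real.sqrt t : ℂ) = (t : ℂ) := by
    rw [← Complex.ofReal_mul, Real.mul_self_sqrt ht]
  have hstc1 : star ((Real.sqrt s : ℝ) : ℂ) = ((Real.sqrt s : ℝ) : ℂ) := by
    rw [Complex.star_def, Complex.conj_ofReal]
  have hstc2 : star ((Real.sqrt t : ℝ) : ℂ) = ((Real.sqrt t : ℝ) : ℂ) := by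
    rw [Complex.star_def, Complex.conj_ofReal]
  refine ⟨Pi.single (σ 0) (1 : ℂ),
    ((Real.sqrt s : ℝ) : ℂ) • (Pi.single (σ 1) (1 : ℂ) : Fin 3 → ℂ)
      + ((Real.sqrt t : ℝ) : ℂ) • (Pi.single (σ 2) (1 : ℂ) : Fin 3 → ℂ),
    ?_, ?_, ?_, ?_, ?_, ?_, ?_⟩ <;>
    simp only [Matrix.mulVec_add, Matrix.mulVec_smul, Matrix.diagonal_mulVec_single, mul_one,
      star_add, star_smul, hstar, hstc1, hstc2, dotProduct_add, add_dotProduct,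
      dotProduct_smul, smul_dotProduct, single_dotProduct, one_mul,
      smul_eq_mul, Pi.single_eq_same, Pi.add_apply, Pi.smul_apply,
      Pi.single_eq_of_ne h01, Pi.single_eq_of_ne h01.symm, Pi.single_eq_of_ne h02,
      Pi.single_eq_of_ne h02.symm, Pi.single_eq_of_ne h12, Pi.single_eq_of_ne h12.symm,
      mul_zero, zero_mul, add_zero, zero_add, Complex.real_smul]
  · rw [hc1, hc2, ← Complex.ofReal_add, hst, Complex.ofReal_one]
  · ring_nf
    rw [sq, sq, hc1, hc2]; ring


lemma fwd_diag (z : Fin 3 → ℂ) (hcol : AffineIndependent ℝ z) (a b : ℂ)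
    (h : IsDiagCompression (Matrix.diagonal z) a b) :
    ∃ σ : Equiv.Perm (Fin 3),
      (a = z (σ 0) ∧ b ∈ segment ℝ (z (σ 1)) (z (σ 2))) ∨
      (b = z (σ 0) ∧ a ∈ segment ℝ (z (σ 1)) (z (σ 2))) := by
  obtain ⟨u, w, h1, h2, h3, h4, h5, h6, h7⟩ := h
  simp only [dotProduct, Matrix.mulVec_diagonal, Pi.star_apply, Fin.sum_univ_three]
    at h1 h2 h3 h4 h5 h6 h7
  have h7' := congrArg (starRingEnd ℂ) h7
  simp only [map_add, _root_.map_mul, map_zero, starRingEnd_apply, star_mul', star_star] at h7'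
  have hall := czero z hcol u w h3 h6 h7'
  rcases hall 0 with hu0 | hw0 <;> rcases hall 1 with hu1 | hw1 <;> rcases hall 2 with hu2 | hw2
  · simp [hu0, hu1, hu2] at h1
  · refine ⟨⟨![2,0,1], ![1,2,0], by decide, by decide⟩, Or.inl ⟨?_, ?_⟩⟩
    · show a = z 2
      simp only [hu0, hu1, star_zero, zero_mul, mul_zero, zero_add, add_zero] at h1 h4
      exact eq_pt (z 2) (u 2) a h1 h4
    · show b ∈ segment ℝ (z 0) (z 1)
      simp only [hw2, star_zero, zero_mul, mul_zero, zero_add, add_zero] at h2 h5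
      rw [← h5]; exact mem_seg _ _ _ _ h2
  · refine ⟨⟨![1,0,2], ![1,0,2], by decide, by decide⟩, Or.inl ⟨?_, ?_⟩⟩
    · show a = z 1
      simp only [hu0, hu2, star_zero, zero_mul, mul_zero, zero_add, add_zero] at h1 h4
      exact eq_pt (z 1) (u 1) a h1 h4
    · show b ∈ segment ℝ (z 0) (z 2)
      simp only [hw1, star_zero, zero_mul, mul_zero, zero_add, add_zero] at h2 h5
      rw [← h5]; exact mem_seg _ _ _ _ h2
  · refine ⟨⟨![0,1,2], ![0,1,2], by decide, by decide⟩, Or.inr ⟨?_, ?_⟩⟩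
    · show b = z 0
      simp only [hw1, hw2, star_zero, zero_mul, mul_zero, zero_add, add_zero] at h2 h5
      exact eq_pt (z 0) (w 0) b h2 h5
    · show a ∈ segment ℝ (z 1) (z 2)
      simp only [hu0, star_zero, zero_mul, mul_zero, zero_add, add_zero] at h1 h4
      rw [← h4]; exact mem_seg _ _ _ _ h1
  · refine ⟨⟨![0,1,2], ![0,1,2], by decide, by decide⟩, Or.inl ⟨?_, ?_⟩⟩
    · show a = z 0
      simp only [hu1, hu2, star_zero, zero_mul, mul_zero, zero_add, add_zero] at h1 h4
      exact eq_pt (z 0) (u 0) a h1 h4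
    · show b ∈ segment ℝ (z 1) (z 2)
      simp only [hw0, star_zero, zero_mul, mul_zero, zero_add, add_zero] at h2 h5
      rw [← h5]; exact mem_seg _ _ _ _ h2
  · refine ⟨⟨![1,0,2], ![1,0,2], by decide, by decide⟩, Or.inr ⟨?_, ?_⟩⟩
    · show b = z 1
      simp only [hw0, hw2, star_zero, zero_mul, mul_zero, zero_add, add_zero] at h2 h5
      exact eq_pt (z 1) (w 1) b h2 h5
    · show a ∈ segment ℝ (z 0) (z 2)
      simp only [hu1, star_zero, zero_mul, mul_zero, zero_add, add_zero] at h1 h4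
      rw [← h4]; exact mem_seg _ _ _ _ h1
  · refine ⟨⟨![2,0,1], ![1,2,0], by decide, by decide⟩, Or.inr ⟨?_, ?_⟩⟩
    · show b = z 2
      simp only [hw0, hw1, star_zero, zero_mul, mul_zero, zero_add, add_zero] at h2 h5
      exact eq_pt (z 2) (w 2) b h2 h5
    · show a ∈ segment ℝ (z 0) (z 1)
      simp only [hu2, star_zero, zero_mul, mul_zero, zero_add, add_zero] at h1 h4
      rw [← h4]; exact mem_seg _ _ _ _ h1
  · simp [hw0, hw1, hw2] at h2

theorem stmt_9 (M : Matrix (Fin 3) (Fin 3) ℂ) (hM : M * Mᴴ = Mᴴ * M)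
    (z : Fin 3 → ℂ) (hz : HasONEigenbasis M z)
    (hcol : AffineIndependent ℝ z) (a b : ℂ) :
    IsDiagCompression M a b ↔
      ∃ σ : Equiv.Perm (Fin 3),
        (a = z (σ 0) ∧ b ∈ segment ℝ (z (σ 1)) (z (σ 2))) ∨
        (b = z (σ 0) ∧ a ∈ segment ℝ (z (σ 1)) (z (σ 2))) := by
  obtain ⟨f, hf1, hf2⟩ := hz
  set F : Matrix (Fin 3) (Fin 3) ℂ := Matrix.of fun i j => f j i with hFdef
  have hFF : Fᴴ * F = 1 := by
    ext i j
    have := hf1 i j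
    simpa [Matrix.mul_apply, Matrix.conjTranspose_apply, dotProduct, Matrix.one_apply,
      hFdef] using this
  have hFF' : F * Fᴴ = 1 := mul_eq_one_comm.mp hFF
  have hMF : M * F = F * Matrix.diagonal z := by
    ext i j
    have h := congrFun (hf2 j) i
    simp only [Matrix.mulVec, dotProduct, Pi.smul_apply, smul_eq_mul] at h
    rw [Matrix.mul_apply, Matrix.mul_diagonal]
    exact h.trans (mul_comm _ _)
  have hM : M = F * Matrix.diagonal z * Fᴴ := by
    rw [← hMF, Matrix.mul_assoc, hFF', Matrix.mul_one]
  have hD : Matrix.diagonal z = Fᴴ * M * F := by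
    rw [Matrix.mul_assoc, hMF, ← Matrix.mul_assoc, hFF, Matrix.one_mul]
  constructor
  · intro h
    have h' : IsDiagCompression (Fᴴ * M * Fᴴᴴ) a b := by
      apply IsDiagCompression.conj
      · rw [Matrix.conjTranspose_conjTranspose]; exact hFF'
      · exact h
    rw [Matrix.conjTranspose_conjTranspose, ← hD] at h'
    exact fwd_diag z hcol a b h'
  · rintro ⟨σ, hcase⟩
    have key : IsDiagCompression (Matrix.diagonal z) a b := by
      rcases hcase with ⟨ha, hb⟩ | ⟨hb, ha⟩
      · obtain ⟨s, t, hs, ht, hst, heq⟩ := hb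
        have hrd := rev_diag z σ s t hs ht hst
        rw [heq, ← ha] at hrd
        exact hrd
      · obtain ⟨s, t, hs, ht, hst, heq⟩ := ha
        have hrd := (rev_diag z σ s t hs ht hst).symm
        rw [heq, ← hb] at hrd
        exact hrd
    rw [hM]
    exact IsDiagCompression.conj F _ hFF a b key

end
end

section
/- Let M = diag(z₁,…,z_N) with z₁,…,z_N ∈ ℂ distinct, and suppose t ∈ Δ_N has exactly two positive components t₁, t₂ > 0, with a = t₁z₁ + t₂z₂. Set u = (√t₁, √t₂, 0, …, 0). Then the set {⟨Mw,w⟩ : ‖w‖=1, ⟨w,u⟩ = 0, ⟨Mu,w⟩ = 0} equals conv{z_j : j > 2}. -/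
open Matrix BigOperators Finset

noncomputable section

theorem stmt_11 {N : ℕ} (hN : 2 ≤ N) (z : Fin N → ℂ) (hz : Function.Injective z)
    (t : Fin N → ℝ) (ht : t ∈ stdSimplex ℝ (Fin N))
    (ht1 : 0 < t ⟨0, by omega⟩) (ht2 : 0 < t ⟨1, by omega⟩)
    (ht0 : ∀ j : Fin N, 2 ≤ (j : ℕ) → t j = 0)
    (a : ℂ) (ha : a = t ⟨0, by omega⟩ • z ⟨0, by omega⟩ + t ⟨1, by omega⟩ • z ⟨1, by omega⟩)
    (u : Fin N → ℂ) (hu : u = fun j => (Real.sqrt (t j) : ℂ)) :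
    {b : ℂ | ∃ w : Fin N → ℂ, star w ⬝ᵥ w = 1 ∧ star w ⬝ᵥ u = 0 ∧
        star w ⬝ᵥ (Matrix.diagonal z).mulVec u = 0 ∧
        star w ⬝ᵥ (Matrix.diagonal z).mulVec w = b} =
      convexHull ℝ {c : ℂ | ∃ j : Fin N, 2 ≤ (j : ℕ) ∧ c = z j} := by
  have h0N : 0 < N := by omega
  have h1N : 1 < N := by omega
  set i0 : Fin N := ⟨0, by omega⟩ with hi0
  set i1 : Fin N := ⟨1, by omega⟩ with hi1
  have hi01 : i0 ≠ i1 := by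
    intro h; exact absurd (congrArg Fin.val h) (by simp [hi0, hi1])
  have hz01 : z i0 ≠ z i1 := fun h => hi01 (hz h)
  have hpair : ∀ j : Fin N, (j : ℕ) < 2 → j = i0 ∨ j = i1 := by
    intro j hj
    have h : (j : ℕ) = 0 ∨ (j : ℕ) = 1 := by omega
    rcases h with h | h
    · exact Or.inl (Fin.ext h)
    · exact Or.inr (Fin.ext h)
  have keysum : ∀ f : Fin N → ℂ, (∀ j : Fin N, 2 ≤ (j : ℕ) → f j = 0) →
      ∑ j, f j = f i0 + f i1 := by
    intro f hf
    refine Fintype.sum_eq_add i0 i1 hi01 fun j hj => ?_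
    refine hf j ?_
    by_contra h
    rcases hpair j (by omega) with h' | h'
    · exact hj.1 h'
    · exact hj.2 h'
  ext b
  simp only [Set.mem_setOf_eq]
  constructor
  · rintro ⟨w, hw1, hw2, hw3, hw4⟩
    simp only [dotProduct, Pi.star_apply, Matrix.mulVec_diagonal, hu,
      RCLike.star_def] at hw1 hw2 hw3 hw4
    -- kill w i0, w i1
    have e2 : ∑ x, starRingEnd ℂ (w x) * (Real.sqrt (t x) : ℂ)
        = starRingEnd ℂ (w i0) * (Real.sqrt (t i0) : ℂ)
          + starRingEnd ℂ (w i1) * (Real.sqrt (t i1) : ℂ) :=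
      keysum _ (fun j hj => by simp [ht0 j hj])
    have e3 : ∑ x, starRingEnd ℂ (w x) * (z x * (Real.sqrt (t x) : ℂ))
        = starRingEnd ℂ (w i0) * (z i0 * (Real.sqrt (t i0) : ℂ))
          + starRingEnd ℂ (w i1) * (z i1 * (Real.sqrt (t i1) : ℂ)) :=
      keysum _ (fun j hj => by simp [ht0 j hj])
    have hw2' : starRingEnd ℂ (w i0) * (Real.sqrt (t i0) : ℂ)
        + starRingEnd ℂ (w i1) * (Real.sqrt (t i1) : ℂ) = 0 := e2.symm.trans hw2
    have hw3' : z i0 * (starRingEnd ℂ (w i0) * (Real.sqrt (t i0) : ℂ))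
        + z i1 * (starRingEnd ℂ (w i1) * (Real.sqrt (t i1) : ℂ)) = 0 := by
      have h := e3.symm.trans hw3
      linear_combination h
    set A := starRingEnd ℂ (w i0) * (Real.sqrt (t i0) : ℂ) with hA
    set B := starRingEnd ℂ (w i1) * (Real.sqrt (t i1) : ℂ) with hB
    have hA0 : A = 0 := by
      have h : (z i0 - z i1) * A = 0 := by linear_combination hw3' - z i1 * hw2'
      rcases mul_eq_zero.mp h with h | h
      · exact absurd (sub_eq_zero.mp h) hz01
      · exact h
    have hB0 : B = 0 := by linear_combination hw2' - hA0
    have hst1 : (Real.sqrt (t i0) : ℂ) ≠ 0 := by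
      simp [Real.sqrt_eq_zero', not_le, ht1]
    have hst2 : (Real.sqrt (t i1) : ℂ) ≠ 0 := by
      simp [Real.sqrt_eq_zero', not_le, ht2]
    have hwi0 : w i0 = 0 := by
      have := (mul_eq_zero.mp hA0).resolve_right hst1
      simpa using this
    have hwi1 : w i1 = 0 := by
      have := (mul_eq_zero.mp hB0).resolve_right hst2
      simpa using this
    -- now build centerMass representation
    set T : Finset (Fin N) := Finset.univ.filter (fun j => 2 ≤ (j : ℕ)) with hT
    have hwz : ∀ j : Fin N, j ∉ T → w j = 0 := by
      intro j hj
      simp only [hT, Finset.mem_filter, Finset.mem_univ, true_and, not_le] at hj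
      rcases hpair j hj with h | h <;> subst h <;> assumption
    set c : Fin N → ℝ := fun j => Complex.normSq (w j) with hc
    have hterm : ∀ j, starRingEnd ℂ (w j) * w j = (c j : ℂ) := by
      intro j; rw [mul_comm]; exact Complex.mul_conj (w j)
    have hsumc : ∑ j ∈ T, c j = 1 := by
      have h1 : ∑ j, (c j : ℂ) = 1 := by
        rw [← hw1]; exact (Finset.sum_congr rfl fun j _ => (hterm j).symm)
      have h2 : ∑ j ∈ T, (c j : ℂ) = ∑ j, (c j : ℂ) := by
        refine Finset.sum_subset (Finset.subset_univ _) ?_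
        intro j _ hj; simp [hc, hwz j hj]
      exact_mod_cast h2.trans h1
    have hbval : b = T.centerMass c z := by
      rw [Finset.centerMass_eq_of_sum_1 _ _ hsumc, ← hw4]
      have h2 : ∑ j ∈ T, (c j : ℂ) * z j = ∑ j, (c j : ℂ) * z j := by
        refine Finset.sum_subset (Finset.subset_univ _) ?_
        intro j _ hj; simp [hc, hwz j hj]
      calc ∑ j, starRingEnd ℂ (w j) * (z j * w j)
          = ∑ j, (c j : ℂ) * z j := by
            refine Finset.sum_congr rfl fun j _ => ?_
            rw [← hterm j]; ring
        _ = ∑ j ∈ T, (c j : ℂ) * z j := h2.symm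
        _ = ∑ j ∈ T, c j • z j := by
            refine Finset.sum_congr rfl fun j _ => ?_
            rw [Complex.real_smul]
    rw [hbval]
    refine Finset.centerMass_mem_convexHull T (fun j _ => Complex.normSq_nonneg _)
      (by rw [hsumc]; norm_num) (fun j hj => ?_)
    refine ⟨j, ?_, rfl⟩
    simpa [hT] using hj
  · intro hb
    rw [_root_.convexHull_eq, Set.mem_setOf_eq] at hb
    obtain ⟨ι, s, wt, p, hw0, hwsum, hp, hcm⟩ := hb
    classical
    have hg : ∀ i ∈ s, ∃ j : Fin N, 2 ≤ (j : ℕ) ∧ p i = z j := hp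
    set g : ι → Fin N := fun i =>
      if h : ∃ j : Fin N, 2 ≤ (j : ℕ) ∧ p i = z j then h.choose else i0 with hgdef
    have hg2 : ∀ i ∈ s, 2 ≤ ((g i : Fin N) : ℕ) ∧ p i = z (g i) := by
      intro i hi
      have h := hg i hi
      simp only [hgdef, dif_pos h]
      exact h.choose_spec
    set c : Fin N → ℝ := fun j => ∑ i ∈ s.filter (fun i => g i = j), wt i with hc
    have hc0 : ∀ j, 0 ≤ c j := by
      intro j
      exact Finset.sum_nonneg fun i hi => hw0 i (Finset.mem_filter.mp hi).1
    have hcsum : ∑ j, c j = 1 := by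
      rw [← hwsum]
      exact Finset.sum_fiberwise_of_maps_to (fun i _ => Finset.mem_univ _) _
    have hczero : ∀ j : Fin N, (j : ℕ) < 2 → c j = 0 := by
      intro j hj
      refine Finset.sum_eq_zero fun i hi => ?_
      rcases Finset.mem_filter.mp hi with ⟨hi1, hi2⟩
      have := (hg2 i hi1).1
      rw [hi2] at this
      omega
    have hbval : ∑ j, (c j : ℂ) * z j = b := by
      have h1 : ∑ j, ∑ i ∈ s.filter (fun i => g i = j), wt i • p i = ∑ i ∈ s, wt i • p i :=
        Finset.sum_fiberwise_of_maps_to (fun i _ => Finset.mem_univ _) _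
      have h3 : ∑ i ∈ s, wt i • p i = b := by
        rw [← Finset.centerMass_eq_of_sum_1 _ _ hwsum]; exact hcm
      rw [← h3, ← h1]
      refine Finset.sum_congr rfl fun j _ => ?_
      rw [hc]
      push_cast
      rw [Finset.sum_mul]
      refine Finset.sum_congr rfl fun i hi => ?_
      rcases Finset.mem_filter.mp hi with ⟨hi1, hi2⟩
      rw [Complex.real_smul, (hg2 i hi1).2, hi2]
    refine ⟨fun j => (Real.sqrt (c j) : ℂ), ?_, ?_, ?_, ?_⟩
    · simp only [dotProduct, Pi.star_apply, RCLike.star_def, Complex.conj_ofReal]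
      push_cast
      rw [show (1 : ℂ) = ((1 : ℝ) : ℂ) by norm_num, ← hcsum]
      push_cast
      exact Finset.sum_congr rfl fun j _ => by
        rw [← Complex.ofReal_mul, Real.mul_self_sqrt (hc0 j)]
    · simp only [dotProduct, Pi.star_apply, RCLike.star_def, Complex.conj_ofReal, hu]
      refine Finset.sum_eq_zero fun j _ => ?_
      rcases lt_or_ge ((j : ℕ)) 2 with h | h
      · rw [hczero j h]; simp
      · rw [ht0 j h]; simp
    · simp only [dotProduct, Pi.star_apply, RCLike.star_def, Complex.conj_ofReal,
        Matrix.mulVec_diagonal, hu]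
      refine Finset.sum_eq_zero fun j _ => ?_
      rcases lt_or_ge ((j : ℕ)) 2 with h | h
      · rw [hczero j h]; simp
      · rw [ht0 j h]; simp
    · simp only [dotProduct, Pi.star_apply, RCLike.star_def, Complex.conj_ofReal,
        Matrix.mulVec_diagonal]
      rw [← hbval]
      refine Finset.sum_congr rfl fun j _ => ?_
      rw [show ((Real.sqrt (c j) : ℂ)) * (z j * (Real.sqrt (c j) : ℂ))
          = ((Real.sqrt (c j) : ℂ) * (Real.sqrt (c j) : ℂ)) * z j by ring,
        ← Complex.ofReal_mul, Real.mul_self_sqrt (hc0 j)]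
end
end

section
/- Let M = diag(z₁,…,z_N) with no three z_j collinear, and suppose t ∈ Δ_N has exactly three positive components t₁,t₂,t₃ > 0, with a = t₁z₁+t₂z₂+t₃z₃. Set u = (√t₁,√t₂,√t₃,0,…,0). Then {⟨Mw,w⟩ : ‖w‖=1, ⟨w,u⟩=0, ⟨Mu,w⟩=0, ⟨Mw,u⟩=0} = conv{z_j : j > 3}. -/
open Matrix BigOperators Finset

noncomputable section

/-!
Write `D = diagonal z` and let `w` satisfy the three orthogonality conditions. The numbers
`v k = conj (w k) * √t k` (for `k < 3`) then satisfy `∑ v = 0`, `∑ v k z k = 0` and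
`∑ conj (v k) z k = 0`, so the real and the imaginary part of `v` are both affine dependencies
among `z 0, z 1, z 2`. As these points are affinely independent, `w` vanishes on the first three
coordinates, and `⟪D w, w⟫ = ∑ |w j|² z j` is a convex combination of the remaining `z j`.
Conversely, a vector supported on `{j | 3 ≤ j}` is orthogonal to everything supported on
`{0, 1, 2}`, and `w j = √(l j)` realises any convex combination `∑ l j z j`.
-/

open ComplexConjugate Function

theorem AffineIndependent.eq_zero_of_sum_eq_zero_of_sum_conj_mul_eq_zero {ι : Type*} [Fintype ι]
    {p : ι → ℂ} (hp : AffineIndependent ℝ p) {v : ι → ℂ} (h₀ : ∑ i, v i = 0)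
    (h₁ : ∑ i, v i * p i = 0) (h₂ : ∑ i, conj (v i) * p i = 0) : v = 0 := by
  have hre : ∑ i, (v i).re • p i = 0 := by
    calc ∑ i, (v i).re • p i
        = (∑ i, v i * p i + ∑ i, conj (v i) * p i) / 2 := by
          simp only [Complex.real_smul, Complex.re_eq_add_conj, ← sum_add_distrib, sum_div]
          exact sum_congr rfl fun i _ => by ring
      _ = 0 := by rw [h₁, h₂]; simp
  have him : ∑ i, (v i).im • p i = 0 := by
    calc ∑ i, (v i).im • p i
        = (∑ i, v i * p i - ∑ i, conj (v i) * p i) / (2 * Complex.I) := by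
          simp only [Complex.real_smul, Complex.im_eq_sub_conj, ← sum_sub_distrib, sum_div]
          exact sum_congr rfl fun i _ => by ring
      _ = 0 := by rw [h₁, h₂]; simp
  have hsum_re : ∑ i, (v i).re = 0 := by rw [← Complex.re_sum, h₀, Complex.zero_re]
  have hsum_im : ∑ i, (v i).im = 0 := by rw [← Complex.im_sum, h₀, Complex.zero_im]
  funext i
  exact Complex.ext
    (affineIndependent_iff.mp hp univ (fun i => (v i).re) hsum_re hre i (mem_univ i))
    (affineIndependent_iff.mp hp univ (fun i => (v i).im) hsum_im him i (mem_univ i))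

section Diagonal

variable {ι : Type*} [Fintype ι]

theorem star_dotProduct_self_eq_sum_normSq (w : ι → ℂ) :
    star w ⬝ᵥ w = ((∑ j, Complex.normSq (w j) : ℝ) : ℂ) := by
  simp only [dotProduct, Pi.star_apply, Complex.star_def, Complex.ofReal_sum,
    Complex.normSq_eq_conj_mul_self]

theorem star_dotProduct_diagonal_mulVec_self [DecidableEq ι] (z w : ι → ℂ) :
    star w ⬝ᵥ diagonal z *ᵥ w = ∑ j, Complex.normSq (w j) • z j := by
  simp only [dotProduct, mulVec_diagonal, Pi.star_apply, Complex.star_def, Complex.real_smul,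
    Complex.normSq_eq_conj_mul_self]
  exact sum_congr rfl fun j _ => by ring

theorem orthogonal_diagonal_iff [DecidableEq ι] {κ : Type*} [Fintype κ] {z u w : ι → ℂ}
    {e : κ → ι}
    (he : Injective e) (hz : AffineIndependent ℝ (z ∘ e))
    (hu_supp : ∀ j ∉ Set.range e, u j = 0) (hu : ∀ k, u (e k) ≠ 0) :
    (star w ⬝ᵥ u = 0 ∧ star w ⬝ᵥ diagonal z *ᵥ u = 0 ∧ star u ⬝ᵥ diagonal z *ᵥ w = 0) ↔
      ∀ k, w (e k) = 0 := by
  simp only [dotProduct, mulVec_diagonal, Pi.star_apply, Complex.star_def]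
  constructor
  · rintro ⟨h₀, h₁, h₂⟩
    have reindex : ∀ f : ι → ℂ, (∀ j ∉ Set.range e, f j = 0) → ∑ j, f j = ∑ k, f (e k) :=
      fun f hf => (Fintype.sum_of_injective e he _ f hf fun _ => rfl).symm
    have hv := hz.eq_zero_of_sum_eq_zero_of_sum_conj_mul_eq_zero
      (v := fun k => conj (w (e k)) * u (e k))
      (by rw [← h₀, reindex _ fun j hj => by simp [hu_supp j hj]])
      (by rw [← h₁, reindex _ fun j hj => by simp [hu_supp j hj]]
          exact sum_congr rfl fun k _ => by simp only [Function.comp_apply]; ring)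
      (by rw [← h₂, reindex _ fun j hj => by simp [hu_supp j hj]]
          exact sum_congr rfl fun k _ => by
            simp only [Function.comp_apply, map_mul, Complex.conj_conj]; ring)
    intro k
    simpa [hu k] using congrFun hv k
  · intro hw
    have hprod : ∀ j, w j * u j = 0 := fun j => by
      by_cases hj : j ∈ Set.range e
      · obtain ⟨k, rfl⟩ := hj
        simp [hw k]
      · simp [hu_supp j hj]
    refine ⟨sum_eq_zero fun j _ => ?_, sum_eq_zero fun j _ => ?_, sum_eq_zero fun j _ => ?_⟩ <;>
      rcases mul_eq_zero.mp (hprod j) with h | h <;> simp [h]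

end Diagonal

section ConvexHull

variable {𝕜 E ι : Type*} [Field 𝕜] [LinearOrder 𝕜] [IsStrictOrderedRing 𝕜] [AddCommGroup E]
  [Module 𝕜 E] [Fintype ι]

theorem mem_convexHull_image_iff_exists_stdSimplex {z : ι → E} {T : Set ι} {x : E} :
    x ∈ convexHull 𝕜 (z '' T) ↔
      ∃ l ∈ stdSimplex 𝕜 ι, (∀ j ∉ T, l j = 0) ∧ ∑ j, l j • z j = x := by
  classical
  constructor
  · intro hx
    let K : Set (ι → 𝕜) := stdSimplex 𝕜 ι ∩ {l | ∀ j ∉ T, l j = 0}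
    have hK : Convex 𝕜 K := (convex_stdSimplex 𝕜 ι).inter fun l hl m hm a b _ _ _ j hj => by
      simp [hl j hj, hm j hj]
    have hsub : z '' T ⊆ Fintype.linearCombination 𝕜 z '' K := by
      rintro _ ⟨j, hj, rfl⟩
      refine ⟨Pi.single j 1, ⟨single_mem_stdSimplex 𝕜 j, fun i hi => ?_⟩, by simp⟩
      exact Pi.single_eq_of_ne (by rintro rfl; exact hi hj) _
    obtain ⟨l, ⟨hl, hlT⟩, rfl⟩ := convexHull_min hsub (hK.linear_image _) hx
    exact ⟨l, hl, hlT, (Fintype.linearCombination_apply 𝕜 z l).symm⟩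
  · rintro ⟨l, hl, hlT, rfl⟩
    rw [← sum_filter_of_ne (p := (· ∈ T)) fun j _ hj =>
      by_contra fun hjT => hj (by simp [hlT j hjT])]
    refine (convex_convexHull 𝕜 _).sum_mem (fun j _ => hl.1 j) ?_ fun j hj =>
      subset_convexHull 𝕜 _ ⟨j, (mem_filter.mp hj).2, rfl⟩
    rw [← hl.2]
    exact sum_filter_of_ne fun j _ hj => by_contra fun hjT => hj (hlT j hjT)

end ConvexHull

theorem setOf_star_dotProduct_diagonal_mulVec_eq_convexHull {ι : Type*} [Fintype ι]
    [DecidableEq ι] (z : ι → ℂ) (T : Set ι) :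
    {b | ∃ w : ι → ℂ, star w ⬝ᵥ w = 1 ∧ (∀ j ∉ T, w j = 0) ∧ star w ⬝ᵥ diagonal z *ᵥ w = b} =
      convexHull ℝ (z '' T) := by
  ext b
  rw [mem_convexHull_image_iff_exists_stdSimplex]
  constructor
  · rintro ⟨w, hw1, hwT, rfl⟩
    refine ⟨fun j => Complex.normSq (w j), ⟨fun j => Complex.normSq_nonneg _, ?_⟩,
      fun j hj => by simp [hwT j hj], (star_dotProduct_diagonal_mulVec_self z w).symm⟩
    exact_mod_cast (star_dotProduct_self_eq_sum_normSq w).symm.trans hw1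
  · rintro ⟨l, hl, hlT, rfl⟩
    have hnormSq : ∀ j, Complex.normSq (Real.sqrt (l j)) = l j := fun j => by
      rw [Complex.normSq_ofReal, Real.mul_self_sqrt (hl.1 j)]
    refine ⟨fun j => Real.sqrt (l j), ?_, fun j hj => by simp [hlT j hj], ?_⟩
    · rw [star_dotProduct_self_eq_sum_normSq]
      simp [hnormSq, hl.2]
    · simp [star_dotProduct_diagonal_mulVec_self, hnormSq]

theorem stmt_12 {N : ℕ} (hN : 3 ≤ N) (z : Fin N → ℂ)
    (hz : ∀ i j k : Fin N, i ≠ j → i ≠ k → j ≠ k → AffineIndependent ℝ ![z i, z j, z k])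
    (t : Fin N → ℝ)
    (ht1 : 0 < t ⟨0, by omega⟩) (ht2 : 0 < t ⟨1, by omega⟩) (ht3 : 0 < t ⟨2, by omega⟩)
    (ht0 : ∀ j : Fin N, 3 ≤ (j : ℕ) → t j = 0)
    (u : Fin N → ℂ) (hu : u = fun j => (Real.sqrt (t j) : ℂ)) :
    {b : ℂ | ∃ w : Fin N → ℂ, star w ⬝ᵥ w = 1 ∧ star w ⬝ᵥ u = 0 ∧
        star w ⬝ᵥ (Matrix.diagonal z).mulVec u = 0 ∧
        star u ⬝ᵥ (Matrix.diagonal z).mulVec w = 0 ∧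
        star w ⬝ᵥ (Matrix.diagonal z).mulVec w = b} =
      convexHull ℝ {c : ℂ | ∃ j : Fin N, 3 ≤ (j : ℕ) ∧ c = z j} := by
  subst hu
  let e : Fin 3 → Fin N := ![⟨0, by omega⟩, ⟨1, by omega⟩, ⟨2, by omega⟩]
  have he : Injective e := by
    intro a b hab
    fin_cases a <;> fin_cases b <;> simp_all [e, Fin.ext_iff]
  have hrange : ∀ j, j ∉ Set.range e ↔ 3 ≤ (j : ℕ) := by
    intro j
    simp [e, Matrix.range_cons, Fin.ext_iff]
    omega
  have hze : AffineIndependent ℝ (z ∘ e) := by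
    convert hz (e 0) (e 1) (e 2) (he.ne (by decide)) (he.ne (by decide)) (he.ne (by decide))
      using 1
    ext k; fin_cases k <;> rfl
  have hT : {c : ℂ | ∃ j : Fin N, 3 ≤ (j : ℕ) ∧ c = z j} = z '' (Set.range e)ᶜ := by
    ext c
    simp only [Set.mem_image, Set.mem_compl_iff, hrange, Set.mem_ofPred_eq, eq_comm]
  have hte : ∀ k, 0 < t (e k) := by
    intro k
    fin_cases k <;> assumption
  have horth := fun w => orthogonal_diagonal_iff (u := fun j => (Real.sqrt (t j) : ℂ)) (w := w)
    he hze (fun j hj => by simp [ht0 j ((hrange j).mp hj)])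
    (fun k => by simpa using (Real.sqrt_pos.mpr (hte k)).ne')
  rw [hT, ← setOf_star_dotProduct_diagonal_mulVec_eq_convexHull]
  ext b
  simp only [Set.mem_ofPred_eq, Set.mem_compl_iff, not_not, Set.forall_mem_range, ← horth,
    and_assoc]
end
end

section
/- Let M = diag(z₁,…,z_N) ∈ M_N(ℂ) with N ≥ 4 and no three z_j collinear. Then for every a ∈ conv{z₁,…,z_N}, the set B(a) = {b ∈ ℂ : diag(a,b) is a compression of M} is nonempty and compact. -/
/-! If `u` is a unit vector with `u* M u = a`, every unit vector `w` orthogonal to `u`, `M u` and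
`M* u` makes `diag(a, w* M w)` a compression of `M`, and such a `w` exists once `N ≥ 4`. For
`M = diag z`, a convex combination `∑ tᵢ zᵢ` is `u* M u` with `uᵢ = √tᵢ`. The pairs `(u, w)`
realising a compression with first entry `a` form a closed bounded set, whose continuous image
under `(u, w) ↦ w* M w` is the set of admissible `b`. -/

open Matrix BigOperators Finset

noncomputable section

section

variable {n : Type*} [Fintype n]

lemma norm_le_one_of_star_dotProduct_self_eq_one {u : n → ℂ} (hu : star u ⬝ᵥ u = 1) :
    ‖u‖ ≤ 1 := by
  have hsum : ∑ i, ‖u i‖ ^ 2 = 1 := by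
    have h := congrArg Complex.re hu
    simpa [dotProduct, Complex.star_def, RCLike.conj_mul, ← Complex.ofReal_pow] using h
  refine (pi_norm_le_iff_of_nonneg zero_le_one).2 fun i => ?_
  refine (sq_le_one_iff₀ (norm_nonneg _)).1 ?_
  exact hsum ▸ single_le_sum (fun j _ => sq_nonneg ‖u j‖) (mem_univ i)

lemma exists_ne_zero_forall_dotProduct_eq_zero {K m : Type*} [Field K] [Fintype m]
    (v : m → n → K) (h : Fintype.card m < Fintype.card n) :
    ∃ w ≠ 0, ∀ i, v i ⬝ᵥ w = 0 := by
  obtain ⟨w, hw, hw0⟩ := Submodule.exists_mem_ne_zero_of_ne_bot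
    (LinearMap.ker_ne_bot_of_finrank_lt (f := (Matrix.of v).mulVecLin) (by simpa using h))
  exact ⟨w, hw0, fun i => congrFun hw i⟩

open scoped ComplexOrder in
lemma exists_smul_star_dotProduct_self_eq_one {w : n → ℂ} (hw : w ≠ 0) :
    ∃ c : ℂ, star (c • w) ⬝ᵥ (c • w) = 1 := by
  obtain ⟨r, hr, hrw⟩ : ∃ r : ℝ, 0 < r ∧ (r : ℂ) = star w ⬝ᵥ w :=
    RCLike.pos_iff_exists_ofReal.1 (dotProduct_star_self_pos_iff.2 hw)
  refine ⟨((√r)⁻¹ : ℝ), ?_⟩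
  rw [star_smul, smul_dotProduct, dotProduct_smul, ← hrw, Complex.star_def, Complex.conj_ofReal,
    smul_eq_mul, smul_eq_mul]
  have hr_sqrt : (√r)⁻¹ * ((√r)⁻¹ * r) = 1 := by
    field_simp
    exact (Real.sq_sqrt hr.le).symm
  exact_mod_cast hr_sqrt

end

section

variable {N : ℕ}

theorem exists_isDiagCompression_of_mem_numRange (hN : 3 < N)
    {M : Matrix (Fin N) (Fin N) ℂ} {a : ℂ} (ha : a ∈ NumRange M) :
    ∃ b, IsDiagCompression M a b := by
  obtain ⟨u, hu, hua⟩ := ha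
  obtain ⟨w, hw0, hw⟩ := exists_ne_zero_forall_dotProduct_eq_zero
    ![star u, star (Mᴴ *ᵥ u), star (M *ᵥ u)] (by simpa using hN)
  have huw : star u ⬝ᵥ w = 0 := hw 0
  have huMw : star u ⬝ᵥ M *ᵥ w = 0 := by
    rw [dotProduct_mulVec, ← conjTranspose_conjTranspose M, ← star_mulVec]
    exact hw 1
  have hMuw : star (M *ᵥ u) ⬝ᵥ w = 0 := hw 2
  have hwMu : star w ⬝ᵥ M *ᵥ u = 0 := by
    rw [star_dotProduct, hMuw, star_zero]
  obtain ⟨c, hc⟩ := exists_smul_star_dotProduct_self_eq_one hw0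
  refine ⟨_, u, c • w, hu, hc, ?_, hua, rfl, ?_, ?_⟩
  · rw [dotProduct_smul, huw, smul_zero]
  · rw [mulVec_smul, dotProduct_smul, huMw, smul_zero]
  · rw [star_smul, smul_dotProduct, hwMu, smul_zero]

lemma sum_smul_mem_numRange_diagonal (z : Fin N → ℂ) {t : Fin N → ℝ}
    (ht : t ∈ stdSimplex ℝ (Fin N)) : ∑ i, t i • z i ∈ NumRange (diagonal z) := by
  have hsq : ∀ i, star (√(t i) : ℂ) * √(t i) = t i := fun i => by
    rw [Complex.star_def, Complex.conj_ofReal, ← Complex.ofReal_mul, Real.mul_self_sqrt (ht.1 i)]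
  refine ⟨fun i => √(t i), ?_, ?_⟩
  · simp only [dotProduct, Pi.star_apply, hsq]
    exact_mod_cast ht.2
  · simp only [dotProduct, mulVec_diagonal, Pi.star_apply, Complex.real_smul]
    refine sum_congr rfl fun i _ => ?_
    rw [mul_left_comm, hsq, mul_comm]

lemma convexHull_range_subset_numRange_diagonal (z : Fin N → ℂ) :
    convexHull ℝ (Set.range z) ⊆ NumRange (diagonal z) := by
  classical
  have hconv : convexHull ℝ (Set.range z) =
      Fintype.linearCombination ℝ z '' stdSimplex ℝ (Fin N) := by
    rw [← convexHull_rangle_single_eq_stdSimplex, LinearMap.image_convexHull, ← Set.range_comp]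
    congr 2
    ext i
    simp
  rw [hconv]
  rintro _ ⟨t, ht, rfl⟩
  rw [Fintype.linearCombination_apply]
  exact sum_smul_mem_numRange_diagonal z ht

theorem isCompact_setOf_isDiagCompression (M : Matrix (Fin N) (Fin N) ℂ) (a : ℂ) :
    IsCompact {b | IsDiagCompression M a b} := by
  let S : Set ((Fin N → ℂ) × (Fin N → ℂ)) :=
    {p | star p.1 ⬝ᵥ p.1 = 1 ∧ star p.2 ⬝ᵥ p.2 = 1 ∧ star p.1 ⬝ᵥ p.2 = 0 ∧
      star p.1 ⬝ᵥ M *ᵥ p.1 = a ∧ star p.1 ⬝ᵥ M *ᵥ p.2 = 0 ∧ star p.2 ⬝ᵥ M *ᵥ p.1 = 0}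
  have hS_closed : IsClosed S := by
    refine (isClosed_eq ?_ ?_).inter <| (isClosed_eq ?_ ?_).inter <| (isClosed_eq ?_ ?_).inter <|
      (isClosed_eq ?_ ?_).inter <| (isClosed_eq ?_ ?_).inter (isClosed_eq ?_ ?_) <;> fun_prop
  have hS_bounded : Bornology.IsBounded S :=
    (Metric.isBounded_closedBall (x := 0) (r := 1)).subset fun p hp => by
      simpa [Prod.norm_def] using ⟨norm_le_one_of_star_dotProduct_self_eq_one hp.1,
        norm_le_one_of_star_dotProduct_self_eq_one hp.2.1⟩
  convert (Metric.isCompact_of_isClosed_isBounded hS_closed hS_bounded).image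
    (f := fun p => star p.2 ⬝ᵥ M *ᵥ p.2) (by fun_prop)
  ext b
  constructor
  · rintro ⟨u, w, hu, hw, huw, hua, rfl, huMw, hwMu⟩
    exact ⟨(u, w), ⟨hu, hw, huw, hua, huMw, hwMu⟩, rfl⟩
  · rintro ⟨⟨u, w⟩, ⟨hu, hw, huw, hua, huMw, hwMu⟩, rfl⟩
    exact ⟨u, w, hu, hw, huw, hua, rfl, huMw, hwMu⟩

end

theorem stmt_14_general {N : ℕ} (hN : 4 ≤ N) (z : Fin N → ℂ)
    (a : ℂ) (ha : a ∈ convexHull ℝ (Set.range z)) :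
    {b : ℂ | IsDiagCompression (Matrix.diagonal z) a b}.Nonempty ∧
      IsCompact {b : ℂ | IsDiagCompression (Matrix.diagonal z) a b} :=
  ⟨exists_isDiagCompression_of_mem_numRange hN (convexHull_range_subset_numRange_diagonal z ha),
    isCompact_setOf_isDiagCompression _ a⟩

theorem stmt_14 {N : ℕ} (hN : 4 ≤ N) (z : Fin N → ℂ)
    (hz : ∀ i j k : Fin N, i ≠ j → i ≠ k → j ≠ k → AffineIndependent ℝ ![z i, z j, z k])
    (a : ℂ) (ha : a ∈ convexHull ℝ (Set.range z)) :
    {b : ℂ | IsDiagCompression (Matrix.diagonal z) a b}.Nonempty ∧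
      IsCompact {b : ℂ | IsDiagCompression (Matrix.diagonal z) a b} :=
  stmt_14_general hN z a ha
end
end

section
/- Let z₁, z₂, z₃, z₄ ∈ ℂ be the vertices, in counterclockwise order, of a convex quadrilateral, let M = diag(z₁,z₂,z₃,z₄), and let a be an interior point of the segment [z₁,z₂]. Then B(a) = {b : diag(a,b) is a compression of M} equals the opposite side [z₃,z₄]. -/
open Matrix BigOperators Finset

noncomputable section

lemma keyReal (x0 x1 x2 x3 y0 y1 y2 y3 p0 p1 p2 p3 t : ℝ)
    (hp2 : 0 ≤ p2) (hp3 : 0 ≤ p3)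
    (hC2 : 0 < (x1-x0)*(y2-y0) - (y1-y0)*(x2-x0))
    (hC3 : 0 < (x1-x0)*(y3-y0) - (y1-y0)*(x3-x0))
    (hsum : p0+p1+p2+p3 = 1)
    (hx : x0*p0+x1*p1+x2*p2+x3*p3 = (1-t)*x0+t*x1)
    (hy : y0*p0+y1*p1+y2*p2+y3*p3 = (1-t)*y0+t*y1) :
    p2 = 0 ∧ p3 = 0 := by
  have h : p2 * ((x1-x0)*(y2-y0) - (y1-y0)*(x2-x0))
      + p3 * ((x1-x0)*(y3-y0) - (y1-y0)*(x3-x0)) = 0 := by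
    linear_combination (x1-x0)*hy - (y1-y0)*hx - ((x1-x0)*y0-(y1-y0)*x0)*hsum
  constructor
  · nlinarith [mul_nonneg hp2 hC2.le, mul_nonneg hp3 hC3.le, mul_pos hC2 hC2]
  · nlinarith [mul_nonneg hp2 hC2.le, mul_nonneg hp3 hC3.le]

theorem stmt_18 (z : Fin 4 → ℂ) (hinj : Function.Injective z)
    (hccw : ∀ j : Fin 4, 0 < cross2 (z (j + 1) - z j) (z (j + 2) - z (j + 1)))
    (t : ℝ) (ht0 : 0 < t) (ht1 : t < 1)
    (a : ℂ) (ha : a = (1 - t) • z 0 + t • z 1) :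
    {b : ℂ | IsDiagCompression (Matrix.diagonal z) a b} = segment ℝ (z 2) (z 3) := by
  have hz01 : z 0 ≠ z 1 := hinj.ne (by decide)
  ext b
  simp only [Set.mem_setOf_eq]
  constructor
  · rintro ⟨u, w, hu, hw, huw, hMa, hMb, hMuw, hMwu⟩
    simp only [dotProduct, Fin.sum_univ_four, Matrix.mulVec_diagonal, Pi.star_apply,
      RCLike.star_def] at hu hw huw hMa hMb hMuw hMwu
    have nsq : ∀ v : ℂ, (starRingEnd ℂ) v * v = ((Complex.normSq v : ℝ) : ℂ) := by
      intro v; rw [Complex.normSq_eq_conj_mul_self]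
    set q0 := Complex.normSq (u 0) with hq0
    set q1 := Complex.normSq (u 1) with hq1
    set q2 := Complex.normSq (u 2) with hq2
    set q3 := Complex.normSq (u 3) with hq3
    have hsum : q0 + q1 + q2 + q3 = 1 := by
      have := hu
      rw [nsq, nsq, nsq, nsq] at this
      exact_mod_cast this
    have hMa' : z 0 * (q0:ℂ) + z 1 * q1 + z 2 * q2 + z 3 * q3
        = (1-(t:ℂ)) * z 0 + (t:ℂ) * z 1 := by
      have e : ∀ j, (starRingEnd ℂ) (u j) * (z j * u j)
          = z j * ((Complex.normSq (u j) : ℝ) : ℂ) := by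
        intro j; rw [Complex.normSq_eq_conj_mul_self]; ring
      rw [e 0, e 1, e 2, e 3, ha, Complex.real_smul, Complex.real_smul] at hMa
      rw [hq0, hq1, hq2, hq3]
      push_cast at hMa ⊢
      linear_combination hMa
    -- real and imaginary parts
    have hre : (z 0).re * q0 + (z 1).re * q1 + (z 2).re * q2 + (z 3).re * q3
        = (1-t) * (z 0).re + t * (z 1).re := by
      have := congrArg Complex.re hMa'
      simpa [Complex.add_re, Complex.sub_re, Complex.mul_re] using this
    have him : (z 0).im * q0 + (z 1).im * q1 + (z 2).im * q2 + (z 3).im * q3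
        = (1-t) * (z 0).im + t * (z 1).im := by
      have := congrArg Complex.im hMa'
      simpa [Complex.add_im, Complex.sub_im, Complex.mul_im] using this
    -- cross products positive
    have h0 := hccw 0
    have h3 := hccw 3
    rw [show (0 + 1 : Fin 4) = 1 by decide, show (0 + 2 : Fin 4) = 2 by decide] at h0
    rw [show (3 + 1 : Fin 4) = 0 by decide, show (3 + 2 : Fin 4) = 1 by decide] at h3
    simp only [cross2, Complex.sub_re, Complex.sub_im] at h0 h3
    have hC2 : 0 < ((z 1).re-(z 0).re)*((z 2).im-(z 0).im)
        - ((z 1).im-(z 0).im)*((z 2).re-(z 0).re) := by nlinarith [h0]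
    have hC3 : 0 < ((z 1).re-(z 0).re)*((z 3).im-(z 0).im)
        - ((z 1).im-(z 0).im)*((z 3).re-(z 0).re) := by nlinarith [h3]
    obtain ⟨hq2z, hq3z⟩ := keyReal (z 0).re (z 1).re (z 2).re (z 3).re
      (z 0).im (z 1).im (z 2).im (z 3).im q0 q1 q2 q3 t
      (Complex.normSq_nonneg _) (Complex.normSq_nonneg _) hC2 hC3 hsum hre him
    have hu2 : u 2 = 0 := by rwa [hq2, Complex.normSq_eq_zero] at hq2z
    have hu3 : u 3 = 0 := by rwa [hq3, Complex.normSq_eq_zero] at hq3z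
    -- q1 = t, q0 = 1 - t
    have hq1t : (q1 : ℝ) = t := by
      have hc : ((q1:ℂ) - t) * (z 1 - z 0) = 0 := by
        have hsC : (q0:ℂ) + q1 = 1 := by
          have h' : q0 + q1 = 1 := by linarith [hsum, hq2z, hq3z]
          exact_mod_cast h'
        rw [hq2z, hq3z] at hMa'
        push_cast at hMa'
        linear_combination hMa' - z 0 * hsC
      rcases mul_eq_zero.mp hc with h | h
      · have : (q1:ℂ) = (t:ℂ) := by linear_combination h
        exact_mod_cast this
      · exact absurd (by linear_combination h) hz01.symm
    have hq0t : (q0 : ℝ) = 1 - t := by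
      rw [hq2z, hq3z, hq1t] at hsum; linarith
    have hu0 : u 0 ≠ 0 := by
      intro h; rw [hq0, h, Complex.normSq_zero] at hq0t; linarith
    have hu1 : u 1 ≠ 0 := by
      intro h; rw [hq1, h, Complex.normSq_zero] at hq1t; linarith
    -- orthogonality kills w 0, w 1
    rw [hu2, hu3] at huw hMuw
    simp only [map_zero, zero_mul, add_zero] at huw hMuw
    have hc0 : (starRingEnd ℂ) (u 0) * w 0 = 0 := by
      have : ((starRingEnd ℂ) (u 0) * w 0) * (z 0 - z 1) = 0 := by
        linear_combination hMuw - z 1 * huw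
      rcases mul_eq_zero.mp this with h | h
      · exact h
      · exact absurd (by linear_combination h) hz01
    have hw0 : w 0 = 0 := by
      rcases mul_eq_zero.mp hc0 with h | h
      · exact absurd (by simpa using congrArg (starRingEnd ℂ) h) hu0
      · exact h
    have hc1 : (starRingEnd ℂ) (u 1) * w 1 = 0 := by linear_combination huw - hc0
    have hw1 : w 1 = 0 := by
      rcases mul_eq_zero.mp hc1 with h | h
      · exact absurd (by simpa using congrArg (starRingEnd ℂ) h) hu1
      · exact h
    -- conclude b ∈ segment
    rw [hw0, hw1] at hw hMb
    simp only [map_zero, zero_mul, mul_zero, zero_add] at hw hMb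
    set r2 := Complex.normSq (w 2) with hr2
    set r3 := Complex.normSq (w 3) with hr3
    have hrsum : r2 + r3 = 1 := by
      rw [nsq, nsq] at hw; exact_mod_cast hw
    refine ⟨r2, r3, Complex.normSq_nonneg _, Complex.normSq_nonneg _, hrsum, ?_⟩
    have e : ∀ j, (starRingEnd ℂ) (w j) * (z j * w j)
        = z j * ((Complex.normSq (w j) : ℝ) : ℂ) := by
      intro j; rw [Complex.normSq_eq_conj_mul_self]; ring
    rw [e 2, e 3] at hMb
    rw [Complex.real_smul, Complex.real_smul, ← hMb]
    ring
  · rintro ⟨s1, s2, hs1, hs2, hssum, hb⟩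
    have h1t : (0:ℝ) ≤ 1 - t := by linarith
    refine ⟨fun j => ((![Real.sqrt (1-t), Real.sqrt t, 0, 0] j : ℝ) : ℂ),
           fun j => ((![0, 0, Real.sqrt s1, Real.sqrt s2] j : ℝ) : ℂ), ?_, ?_, ?_, ?_, ?_, ?_, ?_⟩ <;>
      simp only [dotProduct, Fin.sum_univ_four, Matrix.mulVec_diagonal, Pi.star_apply,
        RCLike.star_def, Complex.conj_ofReal, Matrix.cons_val_zero, Matrix.cons_val_one,
        Matrix.head_cons, Matrix.cons_val_two, Matrix.tail_cons, Matrix.cons_val_three,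
        Complex.ofReal_zero, zero_mul, mul_zero, add_zero, zero_add]
    · norm_cast
      rw [Real.mul_self_sqrt h1t, Real.mul_self_sqrt ht0.le]; ring
    · norm_cast
      rw [Real.mul_self_sqrt hs1, Real.mul_self_sqrt hs2]; linarith
    · have e0 : ((Real.sqrt (1-t) : ℂ)) * (z 0 * Real.sqrt (1-t)) = ((1-t:ℝ):ℂ) * z 0 := by
        rw [show ((Real.sqrt (1-t):ℂ)) * (z 0 * Real.sqrt (1-t))
          = ((Real.sqrt (1-t) * Real.sqrt (1-t) : ℝ) : ℂ) * z 0 by push_cast; ring,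
          Real.mul_self_sqrt h1t]
      have e1 : ((Real.sqrt t : ℂ)) * (z 1 * Real.sqrt t) = ((t:ℝ):ℂ) * z 1 := by
        rw [show ((Real.sqrt t:ℂ)) * (z 1 * Real.sqrt t)
          = ((Real.sqrt t * Real.sqrt t : ℝ) : ℂ) * z 1 by push_cast; ring,
          Real.mul_self_sqrt ht0.le]
      rw [e0, e1, ha, Complex.real_smul, Complex.real_smul]
    · have e0 : ((Real.sqrt s1 : ℂ)) * (z 2 * Real.sqrt s1) = ((s1:ℝ):ℂ) * z 2 := by
        rw [show ((Real.sqrt s1:ℂ)) * (z 2 * Real.sqrt s1)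
          = ((Real.sqrt s1 * Real.sqrt s1 : ℝ) : ℂ) * z 2 by push_cast; ring,
          Real.mul_self_sqrt hs1]
      have e1 : ((Real.sqrt s2 : ℂ)) * (z 3 * Real.sqrt s2) = ((s2:ℝ):ℂ) * z 3 := by
        rw [show ((Real.sqrt s2:ℂ)) * (z 3 * Real.sqrt s2)
          = ((Real.sqrt s2 * Real.sqrt s2 : ℝ) : ℂ) * z 3 by push_cast; ring,
          Real.mul_self_sqrt hs2]
      rw [e0, e1, ← hb, Complex.real_smul, Complex.real_smul]
end
end

section
/- Let z₁, z₂, z₃, z₄ ∈ ℂ be the vertices, in counterclockwise order, of a convex quadrilateral, let M = diag(z₁,z₂,z₃,z₄), and let a = z₁. Then B(a) = {b : diag(a,b) is a compression of M} equals conv{z₂, z₃, z₄}. -/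
open Matrix BigOperators Finset

noncomputable section

lemma stmt19_extreme_aux (z : Fin 4 → ℂ)
    (hccw : ∀ j : Fin 4, 0 < cross2 (z (j + 1) - z j) (z (j + 2) - z (j + 1)))
    (p : Fin 4 → ℝ) (hp : ∀ i, 0 ≤ p i) (hs : ∑ i, p i = 1)
    (heq : ∑ i, (p i : ℂ) * z i = z 0) : p 1 = 0 ∧ p 2 = 0 ∧ p 3 = 0 := by
  have hB : 0 < cross2 (z 1 - z 0) (z 2 - z 1) := by simpa using hccw 0
  have hC : 0 < cross2 (z 3 - z 2) (z 0 - z 3) := by simpa using hccw 2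
  have hA : 0 < cross2 (z 0 - z 3) (z 1 - z 0) := by simpa using hccw 3
  rw [Fin.sum_univ_four] at heq hs
  have hre := congrArg Complex.re heq
  have him := congrArg Complex.im heq
  simp only [Complex.add_re, Complex.add_im, Complex.mul_re, Complex.mul_im,
    Complex.ofReal_re, Complex.ofReal_im, zero_mul, sub_zero, zero_add, add_zero] at hre him
  set A := cross2 (z 0 - z 3) (z 1 - z 0) with hAdef
  set B := cross2 (z 1 - z 0) (z 2 - z 1) with hBdef
  set C := cross2 (z 3 - z 2) (z 0 - z 3) with hCdef
  have key : p 1 * A + p 2 * (B + C) + p 3 * A = 0 := by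
    rw [hAdef, hBdef, hCdef]
    unfold cross2
    simp only [Complex.sub_re, Complex.sub_im]
    linear_combination ((z 3).im - (z 1).im) * hre
      + ((z 1).re - (z 3).re) * him
      - (((z 3).im - (z 1).im) * (z 0).re
        + ((z 1).re - (z 3).re) * (z 0).im) * hs
  have t1 : 0 ≤ p 1 * A := mul_nonneg (hp 1) hA.le
  have t2 : 0 ≤ p 2 * (B + C) := mul_nonneg (hp 2) (by linarith)
  have t3 : 0 ≤ p 3 * A := mul_nonneg (hp 3) hA.le
  have e1 : p 1 * A = 0 := by linarith
  have e2 : p 2 * (B + C) = 0 := by linarith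
  have e3 : p 3 * A = 0 := by linarith
  refine ⟨?_, ?_, ?_⟩
  · rcases mul_eq_zero.1 e1 with h | h
    · exact h
    · exact absurd h hA.ne'
  · rcases mul_eq_zero.1 e2 with h | h
    · exact h
    · exact absurd h (by linarith)
  · rcases mul_eq_zero.1 e3 with h | h
    · exact h
    · exact absurd h hA.ne'

theorem stmt19_main (z : Fin 4 → ℂ) (hinj : Function.Injective z)
    (hccw : ∀ j : Fin 4, 0 < cross2 (z (j + 1) - z j) (z (j + 2) - z (j + 1))) :
    {b : ℂ | ∃ u w : Fin 4 → ℂ,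
    star u ⬝ᵥ u = 1 ∧ star w ⬝ᵥ w = 1 ∧ star u ⬝ᵥ w = 0 ∧
    star u ⬝ᵥ (Matrix.diagonal z).mulVec u = z 0 ∧ star w ⬝ᵥ (Matrix.diagonal z).mulVec w = b ∧
    star u ⬝ᵥ (Matrix.diagonal z).mulVec w = 0 ∧ star w ⬝ᵥ (Matrix.diagonal z).mulVec u = 0} =
      convexHull ℝ {z 1, z 2, z 3} := by
  have hquad : ∀ v : Fin 4 → ℂ, star v ⬝ᵥ (Matrix.diagonal z).mulVec v
      = ∑ i, (Complex.normSq (v i) : ℂ) * z i := by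
    intro v
    simp only [dotProduct, Pi.star_apply, Matrix.mulVec_diagonal, Complex.star_def]
    refine Finset.sum_congr rfl fun i _ => ?_
    rw [Complex.normSq_eq_conj_mul_self]; ring
  have hnorm : ∀ v : Fin 4 → ℂ, star v ⬝ᵥ v = 1 → ∑ i, Complex.normSq (v i) = 1 := by
    intro v hv
    simp only [dotProduct, Pi.star_apply, Complex.star_def] at hv
    have h2 : ∑ i, (Complex.normSq (v i) : ℂ) = 1 := by
      rw [← hv]
      exact Finset.sum_congr rfl fun i _ => Complex.normSq_eq_conj_mul_self
    exact_mod_cast h2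
  ext b
  simp only [Set.mem_setOf_eq]
  constructor
  · rintro ⟨u, w, huu, hww, huw, hMuu, hMww, hMuw, hMwu⟩
    have hsum_u : ∑ i, Complex.normSq (u i) = 1 := hnorm u huu
    have hequ : ∑ i, (Complex.normSq (u i) : ℂ) * z i = z 0 := by rw [← hquad u]; exact hMuu
    obtain ⟨hu1, hu2, hu3⟩ := stmt19_extreme_aux z hccw (fun i => Complex.normSq (u i))
      (fun i => Complex.normSq_nonneg _) hsum_u hequ
    rw [Complex.normSq_eq_zero] at hu1 hu2 hu3
    have hu0 : u 0 ≠ 0 := by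
      intro h0
      rw [Fin.sum_univ_four, h0, hu1, hu2, hu3] at hsum_u
      rw [Complex.normSq_zero] at hsum_u
      norm_num at hsum_u
    have hw0 : w 0 = 0 := by
      simp only [dotProduct, Pi.star_apply, Complex.star_def] at huw
      rw [Fin.sum_univ_four, hu1, hu2, hu3] at huw
      simp only [map_zero, zero_mul, add_zero] at huw
      rcases mul_eq_zero.1 huw with h | h
      · exact absurd (by simpa using h) hu0
      · exact h
    have hsum_w : ∑ i, Complex.normSq (w i) = 1 := hnorm w hww
    have heqw : ∑ i, (Complex.normSq (w i) : ℂ) * z i = b := by rw [← hquad w]; exact hMww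
    set q : Fin 4 → ℝ := fun i => Complex.normSq (w i) with hqdef
    have hq0 : q 0 = 0 := by simp [hqdef, hw0]
    have hs123 : ∑ i ∈ ({1, 2, 3} : Finset (Fin 4)), q i = 1 := by
      rw [Fin.sum_univ_four] at hsum_w
      rw [show ({1, 2, 3} : Finset (Fin 4)) = insert 1 (insert 2 {3}) from rfl,
        Finset.sum_insert (by decide), Finset.sum_insert (by decide), Finset.sum_singleton]
      simp only [hqdef] at hq0 ⊢
      linarith [hq0]
    have hmem := Finset.centerMass_mem_convexHull (R := ℝ) (s := ({z 1, z 2, z 3} : Set ℂ))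
      ({1, 2, 3} : Finset (Fin 4)) (w := q) (fun i _ => Complex.normSq_nonneg _)
      (by rw [hs123]; norm_num) (z := z) (fun i hi => by fin_cases hi <;> simp)
    rw [Finset.centerMass_eq_of_sum_1 _ _ hs123] at hmem
    have hbeq : ∑ i ∈ ({1, 2, 3} : Finset (Fin 4)), q i • z i = b := by
      rw [show ({1, 2, 3} : Finset (Fin 4)) = insert 1 (insert 2 {3}) from rfl,
        Finset.sum_insert (by decide), Finset.sum_insert (by decide), Finset.sum_singleton]
      rw [Fin.sum_univ_four] at heqw
      have hq0' : ((q 0 : ℝ) : ℂ) = 0 := by rw [hq0]; norm_num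
      simp only [Complex.real_smul]
      rw [← heqw]
      simp only [hqdef] at hq0' ⊢
      rw [hq0']
      ring
    rwa [hbeq] at hmem
  · intro hb
    have hsubset : convexHull ℝ ({z 1, z 2, z 3} : Set ℂ) ⊆
        {c : ℂ | ∃ q : Fin 4 → ℝ, (∀ i, 0 ≤ q i) ∧ q 0 = 0 ∧ ∑ i, q i = 1 ∧
          ∑ i, (q i : ℂ) * z i = c} := by
      apply convexHull_min
      · intro x hx
        simp only [Set.mem_insert_iff, Set.mem_singleton_iff] at hx
        rcases hx with rfl | rfl | rfl
        · exact ⟨fun i => if i = 1 then 1 else 0, fun i => by dsimp; split <;> norm_num,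
            by simp, by rw [Fin.sum_univ_four]; simp, by rw [Fin.sum_univ_four]; simp⟩
        · exact ⟨fun i => if i = 2 then 1 else 0, fun i => by dsimp; split <;> norm_num,
            by simp, by rw [Fin.sum_univ_four]; simp, by rw [Fin.sum_univ_four]; simp⟩
        · exact ⟨fun i => if i = 3 then 1 else 0, fun i => by dsimp; split <;> norm_num,
            by simp, by rw [Fin.sum_univ_four]; simp, by rw [Fin.sum_univ_four]; simp⟩
      · rintro x ⟨qx, hx1, hx2, hx3, hx4⟩ y ⟨qy, hy1, hy2, hy3, hy4⟩ a c ha hc hac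
        refine ⟨fun i => a * qx i + c * qy i,
          fun i => add_nonneg (mul_nonneg ha (hx1 i)) (mul_nonneg hc (hy1 i)),
          by show a * qx 0 + c * qy 0 = 0; rw [hx2, hy2]; ring, ?_, ?_⟩
        · rw [Finset.sum_add_distrib, ← Finset.mul_sum, ← Finset.mul_sum, hx3, hy3]
          simpa using hac
        · push_cast
          simp only [add_mul, Finset.sum_add_distrib, mul_assoc, ← Finset.mul_sum, hx4, hy4]
          simp [Complex.real_smul]
    obtain ⟨q, hq, hq0, hqs, hqz⟩ := hsubset hb
    have hsq : ∀ i, ((Real.sqrt (q i) : ℝ) : ℂ) * ((Real.sqrt (q i) : ℝ) : ℂ) = (q i : ℂ) := by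
      intro i
      rw [← Complex.ofReal_mul, Real.mul_self_sqrt (hq i)]
    refine ⟨fun i => if i = 0 then 1 else 0, fun i => ((Real.sqrt (q i) : ℝ) : ℂ),
      ?_, ?_, ?_, ?_, ?_, ?_, ?_⟩
    · simp [dotProduct, Fin.sum_univ_four]
    · simp only [dotProduct, Pi.star_apply, Complex.star_def, Complex.conj_ofReal]
      rw [Finset.sum_congr rfl fun i _ => hsq i, ← Complex.ofReal_sum, hqs]
      norm_num
    · simp [dotProduct, Fin.sum_univ_four, hq0]
    · simp [dotProduct, Matrix.mulVec_diagonal, Fin.sum_univ_four]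
    · simp only [dotProduct, Pi.star_apply, Matrix.mulVec_diagonal, Complex.star_def,
        Complex.conj_ofReal]
      rw [← hqz]
      refine Finset.sum_congr rfl fun i _ => ?_
      rw [← hsq i]; ring
    · simp [dotProduct, Matrix.mulVec_diagonal, Fin.sum_univ_four, hq0]
    · simp [dotProduct, Matrix.mulVec_diagonal, Fin.sum_univ_four, hq0, Complex.conj_ofReal]


theorem stmt_19 (z : Fin 4 → ℂ) (hinj : Function.Injective z)
    (hccw : ∀ j : Fin 4, 0 < cross2 (z (j + 1) - z j) (z (j + 2) - z (j + 1))) :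
    {b : ℂ | IsDiagCompression (Matrix.diagonal z) (z 0) b} =
      convexHull ℝ {z 1, z 2, z 3} := stmt19_main z hinj hccw
end
end
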